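/- Assume ‖φ_j‖₂ = 1 for all j ∈ [n], let P be an orthogonal projection of ℝ^m, and let g be distributed according to the standard Gaussian measure on ℝ^K. Then 𝔼[f_{j_c^{(P)}}^{(P)}(g)] − max_{j∉S} 𝔼[f_j^{(P)}(g)] ≥ (γ_c^{(P)} − γ_i^{(P)}) − √(2/π) ‖σ‖₁, where γ_c^{(P)} := max_{j∈S} Σ_{k=1}^K β_{j,k}^{(P)} and γ_i^{(P)} := max_{j∉S} Σ_{k=1}^K β_{j,k}^{(P)}. -/

import Mathlib

/-!
By Fubini, each expectation `𝔼[f_j(g)]` splits into the one-dimensional expectations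
`𝔼|β_{j,k} + s g|` with `g ~ N(0,1)` and `0 ≤ s = ‖(I-P)φ_j‖₂ σ_k ≤ σ_k`, since an orthogonal
projection does not increase norms. Jensen's inequality bounds `𝔼|β + s g|` below by `|β| = β`,
and the triangle inequality bounds it above by `β + s 𝔼|g| = β + s √(2/π)`. The lower bound is
used at `j_c`, the upper bound at every `j ∉ S`.
-/

open Finset MeasureTheory ProbabilityTheory Real

open Matrix in
lemma Matrix.dotProduct_mulVec_self_le {m : Type*} [Fintype m] {Q : Matrix m m ℝ}
    (hQsymm : Q.IsSymm) (hQidem : Q * Q = Q) (v : m → ℝ) :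
    Q *ᵥ v ⬝ᵥ Q *ᵥ v ≤ v ⬝ᵥ v := by
  have hself : Q *ᵥ v ⬝ᵥ Q *ᵥ v = v ⬝ᵥ Q *ᵥ v := by
    rw [dotProduct_comm, dotProduct_mulVec, ← mulVec_transpose, hQsymm.eq, mulVec_mulVec, hQidem,
      dotProduct_comm]
  have hnonneg : 0 ≤ (v - Q *ᵥ v) ⬝ᵥ (v - Q *ᵥ v) :=
    sum_nonneg fun i _ => mul_self_nonneg _
  rw [sub_dotProduct, dotProduct_sub, dotProduct_sub, dotProduct_comm (Q *ᵥ v) v] at hnonneg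
  linarith

open Matrix in
lemma Matrix.sqrt_sum_sq_mulVec_one_sub_le_one {m : Type*} [Fintype m] [DecidableEq m]
    {P : Matrix m m ℝ} (hPsymm : P.IsSymm) (hPidem : P * P = P) {v : m → ℝ}
    (hv : ∑ i, v i ^ 2 = 1) :
    √(∑ i, ((1 - P) *ᵥ v) i ^ 2) ≤ 1 := by
  have hQsymm : (1 - P).IsSymm := isSymm_one.sub hPsymm
  have hQidem : (1 - P) * (1 - P) = 1 - P := by
    rw [sub_mul, mul_sub, mul_sub, hPidem]
    simp
  have hcontract := dotProduct_mulVec_self_le hQsymm hQidem v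
  simp only [dotProduct, ← sq, hv] at hcontract
  exact sqrt_le_one.mpr hcontract

section AbsAffine

variable {μ : Measure ℝ} [IsProbabilityMeasure μ]

lemma integrable_abs_add_mul (hμ : Integrable (fun x ↦ x) μ) (a b : ℝ) :
    Integrable (fun x ↦ |a + b * x|) μ :=
  ((integrable_const a).add (hμ.const_mul b)).abs

lemma abs_le_integral_abs_add_mul (hμ : Integrable (fun x ↦ x) μ) (hmean : ∫ x, x ∂μ = 0)
    (a b : ℝ) : |a| ≤ ∫ x, |a + b * x| ∂μ := by
  have hmean_affine : ∫ x, (a + b * x) ∂μ = a := by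
    rw [integral_add (integrable_const a) (hμ.const_mul b), integral_const_mul, hmean]
    simp
  calc |a| = |∫ x, (a + b * x) ∂μ| := by rw [hmean_affine]
    _ ≤ ∫ x, |a + b * x| ∂μ := abs_integral_le_integral_abs

lemma integral_abs_add_mul_le (hμ : Integrable (fun x ↦ x) μ) (a b : ℝ) :
    ∫ x, |a + b * x| ∂μ ≤ |a| + |b| * ∫ x, |x| ∂μ := by
  have hmajorant : Integrable (fun x ↦ |a| + |b| * |x|) μ :=
    (integrable_const _).add (hμ.abs.const_mul _)
  calc ∫ x, |a + b * x| ∂μ ≤ ∫ x, (|a| + |b| * |x|) ∂μ :=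
        integral_mono (integrable_abs_add_mul hμ a b) hmajorant
          fun x ↦ (abs_add_le _ _).trans_eq (by rw [abs_mul])
    _ = |a| + |b| * ∫ x, |x| ∂μ := by
        rw [integral_add (integrable_const _) (hμ.abs.const_mul _), integral_const_mul]
        simp

end AbsAffine

lemma integral_sum_comp_eval {ι : Type*} [Fintype ι] {μ : ι → Measure ℝ}
    [∀ i, IsProbabilityMeasure (μ i)] {h : ι → ℝ → ℝ} (hh : ∀ i, Integrable (h i) (μ i)) :
    ∫ g, ∑ i, h i (g i) ∂Measure.pi μ = ∑ i, ∫ x, h i x ∂μ i := by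
  rw [integral_finsetSum _ fun i _ ↦ integrable_comp_eval (hh i)]
  exact sum_congr rfl fun i _ ↦ integral_comp_eval (hh i).aestronglyMeasurable

lemma integrable_id_gaussianReal (m : ℝ) (v : NNReal) : Integrable (fun x ↦ x) (gaussianReal m v) :=
  memLp_one_iff_integrable.mp (memLp_id_gaussianReal 1)

lemma integral_Ioi_mul_exp_neg_half_sq :
    ∫ x in Set.Ioi (0 : ℝ), x * exp (-(1 / 2) * x ^ 2) = 1 := by
  have h := integral_rpow_mul_exp_neg_mul_rpow (p := 2) (q := 1) (b := 1 / 2)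
    (by norm_num) (by norm_num) (by norm_num)
  norm_num at h
  simpa [rpow_natCast] using h

lemma integral_abs_gaussianReal_zero_one : ∫ x, |x| ∂gaussianReal 0 1 = √(2 / π) := by
  have hpdf : ∀ x, gaussianPDFReal 0 1 x = (√(2 * π))⁻¹ * exp (-(1 / 2) * x ^ 2) := by
    intro x
    simp only [gaussianPDFReal, NNReal.coe_one, mul_one, sub_zero]
    ring_nf
  have heven : (fun x ↦ gaussianPDFReal 0 1 x • |x|) =
      fun x ↦ |x| * exp (-(1 / 2) * |x| ^ 2) * (√(2 * π))⁻¹ := by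
    ext x
    rw [hpdf, sq_abs, smul_eq_mul]
    ring
  rw [integral_gaussianReal_eq_integral_smul one_ne_zero, heven,
    integral_comp_abs (f := fun x ↦ x * exp (-(1 / 2) * x ^ 2) * (√(2 * π))⁻¹),
    integral_mul_const, integral_Ioi_mul_exp_neg_half_sq,
    show (2 : ℝ) / π = 2 ^ 2 / (2 * π) by field_simp, sqrt_div' _ (by positivity),
    sqrt_sq (by norm_num)]
  ring

section StandardGaussianVector

variable {ι : Type*} [Fintype ι]

lemma integral_sum_abs_add_mul_gaussian (a b : ι → ℝ) :
    ∫ g, ∑ i, |a i + b i * g i| ∂Measure.pi (fun _ : ι ↦ gaussianReal 0 1) =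
      ∑ i, ∫ x, |a i + b i * x| ∂gaussianReal 0 1 :=
  integral_sum_comp_eval fun i ↦ integrable_abs_add_mul (integrable_id_gaussianReal 0 1) (a i) (b i)

lemma sum_abs_le_integral_sum_abs_add_mul_gaussian (a b : ι → ℝ) :
    ∑ i, |a i| ≤ ∫ g, ∑ i, |a i + b i * g i| ∂Measure.pi (fun _ : ι ↦ gaussianReal 0 1) := by
  rw [integral_sum_abs_add_mul_gaussian]
  exact sum_le_sum fun i _ ↦ abs_le_integral_abs_add_mul (integrable_id_gaussianReal 0 1)
    integral_id_gaussianReal (a i) (b i)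

lemma integral_sum_abs_add_mul_gaussian_le (a b : ι → ℝ) :
    ∫ g, ∑ i, |a i + b i * g i| ∂Measure.pi (fun _ : ι ↦ gaussianReal 0 1) ≤
      ∑ i, |a i| + √(2 / π) * ∑ i, |b i| := by
  rw [integral_sum_abs_add_mul_gaussian, mul_sum, ← sum_add_distrib]
  refine sum_le_sum fun i _ ↦ ?_
  have h := integral_abs_add_mul_le (integrable_id_gaussianReal 0 1) (a i) (b i)
  rwa [integral_abs_gaussianReal_zero_one, mul_comm |b i|] at h

end StandardGaussianVector

theorem stmt11_general {m n K : ℕ} (Φ : Matrix (Fin m) (Fin n) ℝ)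
    (S : Finset (Fin n))
    (hSne : S.Nonempty) (hScne : Sᶜ.Nonempty)
    (σ : Fin K → ℝ) (hσ : ∀ k, 0 ≤ σ k)
    (hunit : ∀ j, ∑ i, Φ i j ^ 2 = 1)
    (P : Matrix (Fin m) (Fin m) ℝ) (hPsymm : P.IsSymm) (hPidem : P * P = P)
    (R : Matrix (Fin m) (Fin K) ℝ)
    (β : Fin n → Fin K → ℝ) (hβ : ∀ j k, β j k = |∑ i, Φ i j * R i k|)
    (σP : Fin n → Fin K → ℝ)
    (hσP : ∀ j k, σP j k =
      Real.sqrt (∑ i, ((1 - P).mulVec fun i' => Φ i' j) i ^ 2) * σ k)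
    (f : Fin n → (Fin K → ℝ) → ℝ)
    (hf : ∀ j g, f j g = ∑ k, |β j k + σP j k * g k|)
    (jc : Fin n) (hjc : jc ∈ S) (hjcmax : ∀ j ∈ S, (∑ k, β j k) ≤ ∑ k, β jc k)
    (γc γi : ℝ)
    (hγc : γc = S.sup' hSne fun j => ∑ k, β j k)
    (hγi : γi = Sᶜ.sup' hScne fun j => ∑ k, β j k) :
    (γc - γi) - Real.sqrt (2 / Real.pi) * (∑ k, σ k) ≤
      (∫ g, f jc g ∂(Measure.pi fun _ : Fin K => gaussianReal 0 1)) -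
        Sᶜ.sup' hScne fun j => ∫ g, f j g ∂(Measure.pi fun _ : Fin K => gaussianReal 0 1) := by
  have habs_β : ∀ j k, |β j k| = β j k := fun j k ↦ abs_of_nonneg (hβ j k ▸ abs_nonneg _)
  have habs_σP : ∀ j k, |σP j k| ≤ σ k := fun j k ↦ by
    rw [hσP, abs_of_nonneg (mul_nonneg (sqrt_nonneg _) (hσ k))]
    exact mul_le_of_le_one_left (hσ k)
      (Matrix.sqrt_sum_sq_mulVec_one_sub_le_one hPsymm hPidem (hunit j))
  have hlower : γc ≤ ∫ g, f jc g ∂(Measure.pi fun _ : Fin K => gaussianReal 0 1) := by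
    rw [hγc, (sup'_le _ _ hjcmax).antisymm (le_sup' (fun j ↦ ∑ k, β j k) hjc), funext (hf jc)]
    simpa only [habs_β] using sum_abs_le_integral_sum_abs_add_mul_gaussian (β jc) (σP jc)
  have hupper : (Sᶜ.sup' hScne fun j ↦
      ∫ g, f j g ∂(Measure.pi fun _ : Fin K => gaussianReal 0 1)) ≤ γi + √(2 / π) * ∑ k, σ k := by
    refine sup'_le _ _ fun j hj ↦ ?_
    rw [funext (hf j)]
    refine (integral_sum_abs_add_mul_gaussian_le (β j) (σP j)).trans ?_
    rw [sum_congr rfl fun k _ ↦ habs_β j k, hγi]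
    gcongr
    · exact le_sup' (fun j ↦ ∑ k, β j k) hj
    · exact habs_σP _ _
  linarith

/-- SOMP setting: atoms `φ_j` (columns of `Φ`) with unit `ℓ₂` norm,
joint support `S` of `X`, noise standard deviations `σ`, `P` an orthogonal projection
matrix of `ℝ^m`, `β j k = |⟪φ_j, (I-P)Φx_k⟫|`, `σP j k = ‖(I-P)φ_j‖₂ σ_k`,
`f j g = ∑ k, |β j k + σP j k * g k|`, and `jc` the argmax over `S` of `∑ k, β j k`.
With `g` standard Gaussian on `ℝ^K`,
`𝔼[f jc g] - max_{j ∉ S} 𝔼[f j g] ≥ (γc - γi) - √(2/π) ‖σ‖₁`, where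
`γc = max_{j ∈ S} ∑ k, β j k` and `γi = max_{j ∉ S} ∑ k, β j k`. -/
theorem stmt11 {m n K : ℕ} (Φ : Matrix (Fin m) (Fin n) ℝ)
    (X : Matrix (Fin n) (Fin K) ℝ)
    (S : Finset (Fin n)) (hS : ∀ j, j ∈ S ↔ ∃ k, X j k ≠ 0)
    (hSne : S.Nonempty) (hScne : Sᶜ.Nonempty)
    (σ : Fin K → ℝ) (hσ : ∀ k, 0 ≤ σ k)
    (hunit : ∀ j, ∑ i, Φ i j ^ 2 = 1)
    (P : Matrix (Fin m) (Fin m) ℝ) (hPsymm : P.IsSymm) (hPidem : P * P = P)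
    (R : Matrix (Fin m) (Fin K) ℝ) (hR : R = (1 - P) * Φ * X)
    (β : Fin n → Fin K → ℝ) (hβ : ∀ j k, β j k = |∑ i, Φ i j * R i k|)
    (σP : Fin n → Fin K → ℝ)
    (hσP : ∀ j k, σP j k =
      Real.sqrt (∑ i, ((1 - P).mulVec fun i' => Φ i' j) i ^ 2) * σ k)
    (f : Fin n → (Fin K → ℝ) → ℝ)
    (hf : ∀ j g, f j g = ∑ k, |β j k + σP j k * g k|)
    (jc : Fin n) (hjc : jc ∈ S) (hjcmax : ∀ j ∈ S, (∑ k, β j k) ≤ ∑ k, β jc k)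
    (γc γi : ℝ)
    (hγc : γc = S.sup' hSne fun j => ∑ k, β j k)
    (hγi : γi = Sᶜ.sup' hScne fun j => ∑ k, β j k) :
    (γc - γi) - Real.sqrt (2 / Real.pi) * (∑ k, σ k) ≤
      (∫ g, f jc g ∂(Measure.pi fun _ : Fin K => gaussianReal 0 1)) -
        Sᶜ.sup' hScne fun j => ∫ g, f j g ∂(Measure.pi fun _ : Fin K => gaussianReal 0 1) :=
  stmt11_general Φ S hSne hScne σ hσ hunit P hPsymm hPidem R β hβ σP hσP f hf jc hjc hjcmax γc γi
    hγc hγi
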